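/- There exists a constant C > 0 such that for all positive integers n and m, n + m·α(m+n, n) ≤ C·(m + n·log* n + n). -/

import Mathlib

/-- The Ackermann function: `A 1 j = 2^j`, `A (i+1) 1 = A i 2`,
`A (i+1) (j+1) = A i (A (i+1) j)` for `i, j ≥ 1`. Values at `i = 0` or `j = 0`
are irrelevant (set to `0`). -/
def ackFn : ℕ → ℕ → ℕ
  | 0, _ => 0
  | 1, j => 2 ^ j
  | _ + 2, 0 => 0
  | i + 2, 1 => ackFn (i + 1) 2
  | i + 2, j + 2 => ackFn (i + 1) (ackFn (i + 2) (j + 1))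
termination_by i j => (i, j)

/-- Inverse Ackermann function: `α(m,n) = min {i ≥ 1 : A(i,⌊m/n⌋) > ⌊log₂ n⌋}`. -/
noncomputable def ackAlpha (m n : ℕ) : ℕ :=
  sInf {i : ℕ | 1 ≤ i ∧ Nat.log 2 n < ackFn i (m / n)}

/-- Iterated logarithm: the least `k ≥ 0` such that applying `⌊log₂ ·⌋`
`k` times to `n` yields a value at most `1`. -/
def logStar (n : ℕ) : ℕ :=
  if n ≤ 1 then 0 else logStar (Nat.log 2 n) + 1
decreasing_by exact Nat.log_lt_self 2 (by omega)

/-!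
Write `j = ⌊(m+n)/n⌋` and `k = α(m+n, n)`, so that `m ≤ n j`. If `k ≤ 2` the bound is immediate
(this covers the junk value `k = 0` of an empty `sInf`).
Otherwise `A(k-1, j) ≤ log₂ n` by minimality of `k`, and since the Ackermann function dominates
the tower of twos, `A(i+1, j) ≥ tower(i j + 1)`, this forces `(k-2) j + 1 ≤ log* n`.
Hence `m (k-2) ≤ n j (k-2) ≤ n log* n - n`, and `n + m k ≤ 3 (m + n log* n + n)`.
-/

def tower : ℕ → ℕ
  | 0 => 1
  | t + 1 => 2 ^ tower t

lemma tower_succ (t : ℕ) : tower (t + 1) = 2 ^ tower t := rfl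

lemma tower_strictMono : StrictMono tower :=
  strictMono_nat_of_lt_succ fun _ => Nat.lt_two_pow_self

lemma lt_tower (t : ℕ) : t < tower t := by
  induction t with
  | zero => decide
  | succ t ih => exact (Nat.succ_le_of_lt ih).trans_lt (tower_strictMono t.lt_succ_self)

lemma logStar_of_two_le {n : ℕ} (hn : 2 ≤ n) : logStar n = logStar (Nat.log 2 n) + 1 := by
  rw [logStar, if_neg (by omega)]

lemma logStar_mono : Monotone logStar := by
  intro a
  induction a using Nat.strong_induction_on with
  | _ a ih =>
    intro b hab
    by_cases ha : a ≤ 1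
    · rw [logStar, if_pos ha]
      exact Nat.zero_le _
    · rw [logStar_of_two_le (n := a) (by omega), logStar_of_two_le (n := b) (by omega)]
      exact Nat.succ_le_succ <|
        ih _ (Nat.log_lt_self 2 (by omega)) (Nat.log_mono_right hab)

lemma logStar_tower (t : ℕ) : logStar (tower t) = t := by
  induction t with
  | zero => rw [tower, logStar, if_pos le_rfl]
  | succ t ih =>
    have h2 : 2 ≤ tower (t + 1) := by have := lt_tower (t + 1); omega
    rw [logStar_of_two_le h2, tower_succ, Nat.log_pow one_lt_two, ih]

lemma le_logStar_of_tower_le {t N : ℕ} (h : tower t ≤ N) : t ≤ logStar N :=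
  logStar_tower t ▸ logStar_mono h

lemma ackFn_one (j : ℕ) : ackFn 1 j = 2 ^ j := by
  rw [ackFn]

lemma ackFn_succ_one (i : ℕ) : ackFn (i + 2) 1 = ackFn (i + 1) 2 := by
  rw [ackFn]

lemma ackFn_succ_succ (i j : ℕ) :
    ackFn (i + 2) (j + 2) = ackFn (i + 1) (ackFn (i + 2) (j + 1)) := by
  rw [ackFn]

lemma tower_le_ackFn_two (j : ℕ) : tower (j + 2) ≤ ackFn 2 (j + 1) := by
  induction j with
  | zero => rw [ackFn_succ_one, ackFn_one]; decide
  | succ j ih =>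
    rw [ackFn_succ_succ, ackFn_one, tower_succ]
    exact Nat.pow_le_pow_right two_pos ih

lemma tower_le_ackFn {i : ℕ} (hi : 1 ≤ i) (j : ℕ) :
    tower (i * (j + 1) + 1) ≤ ackFn (i + 1) (j + 1) := by
  induction i, hi using Nat.le_induction generalizing j with
  | base => simpa only [one_mul] using tower_le_ackFn_two j
  | succ i hi ih =>
    induction j with
    | zero =>
      calc tower ((i + 1) * (0 + 1) + 1) ≤ tower (i * (1 + 1) + 1) :=
            tower_strictMono.monotone (by omega)
        _ ≤ ackFn (i + 1) (1 + 1) := ih 1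
        _ = ackFn (i + 1 + 1) (0 + 1) := (ackFn_succ_one i).symm
    | succ j ihj =>
      set x := ackFn (i + 2) (j + 1)
      have hx : (i + 1) * (j + 1) + 1 < x := (lt_tower _).trans_le ihj
      have hix : (i + 1) * (j + 1 + 1) ≤ i * x := by
        nlinarith [Nat.mul_le_mul_left i hx, Nat.mul_le_mul_right ((i + 1) * (j + 1)) hi]
      calc tower ((i + 1) * (j + 1 + 1) + 1) ≤ tower (i * (x - 1 + 1) + 1) :=
            tower_strictMono.monotone (by rw [Nat.sub_add_cancel (by omega)]; omega)
        _ ≤ ackFn (i + 1) (x - 1 + 1) := ih (x - 1)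
        _ = ackFn (i + 1 + 1) (j + 1 + 1) := by
          rw [Nat.sub_add_cancel (by omega), ackFn_succ_succ]

lemma ackFn_le_log_of_lt_ackAlpha {m n i : ℕ} (hi : 1 ≤ i) (h : i < ackAlpha m n) :
    ackFn i (m / n) ≤ Nat.log 2 n :=
  not_lt.1 fun hlt => Nat.notMem_of_lt_sInf h ⟨hi, hlt⟩

lemma ackAlpha_sub_two_mul_div_lt_logStar {m n : ℕ} (hmn : 0 < m / n) (hα : 3 ≤ ackAlpha m n) :
    (ackAlpha m n - 2) * (m / n) < logStar n := by
  obtain ⟨j, hj⟩ : ∃ j, m / n = j + 1 := ⟨m / n - 1, by omega⟩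
  have hA : ackFn (ackAlpha m n - 2 + 1) (m / n) ≤ n :=
    (ackFn_le_log_of_lt_ackAlpha (by omega) (by omega)).trans (Nat.log_le_self 2 n)
  rw [hj] at hA ⊢
  exact le_logStar_of_tower_le ((tower_le_ackFn (by omega) j).trans hA)

/-- There is a constant `C > 0` such that for all positive integers `n, m`,
`n + m·α(m+n, n) ≤ C·(m + n·log* n + n)`. -/
theorem ackAlpha_bound :
    ∃ C : ℕ, 0 < C ∧ ∀ n m : ℕ, 1 ≤ n → 1 ≤ m →
      n + m * ackAlpha (m + n) n ≤ C * (m + n * logStar n + n) := by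
  refine ⟨3, three_pos, fun n m hn hm => ?_⟩
  have hmj : m ≤ n * ((m + n) / n) := by
    have := Nat.lt_mul_div_succ (m + n) hn
    rw [mul_add_one] at this
    omega
  set k := ackAlpha (m + n) n
  set j := (m + n) / n
  rcases le_or_gt k 2 with hk | hk
  · nlinarith
  have hkj : n * ((k - 2) * j + 1) ≤ n * logStar n :=
    Nat.mul_le_mul_left n (ackAlpha_sub_two_mul_div_lt_logStar (Nat.div_pos (by omega) hn) hk)
  calc n + m * k = n + (m * (k - 2) + m * 2) := by rw [← mul_add, Nat.sub_add_cancel hk.le]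
    _ ≤ n + (n * j * (k - 2) + m * 2) := by gcongr
    _ = n * ((k - 2) * j + 1) + 2 * m := by ring
    _ ≤ 3 * (m + n * logStar n + n) := by omega
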